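/- Two Borel parametrized equivalence relations are Borel isomorphic if and only if they have the same fine shape: if E on X and F on Y are Borel parametrized, then there is a Borel bijection h : X → Y with x E x' ↔ h(x) F h(x') if and only if for every nonzero cardinal m ≤ 2^{ℵ₀}, the number of E-classes of cardinality m equals the number of F-classes of cardinality m. -/

import Mathlib

/-- `C⁺ = {1, 2, ..., ℵ₀, 2^ℵ₀}`, the possible cardinalities of nonempty Borel sets. -/
def Cplus : Set Cardinal :=
  {m | m ≠ 0 ∧ (m ≤ Cardinal.aleph0 ∨ m = Cardinal.continuum)}

/-- The natural (sigma/product) measurable structure on `Σ m, Z m × W m`. -/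
def sigmaProdMS (Z W : Cplus → Type) (mZ : ∀ m, MeasurableSpace (Z m))
    (mW : ∀ m, MeasurableSpace (W m)) : MeasurableSpace (Σ m : Cplus, Z m × W m) :=
  letI : ∀ m, MeasurableSpace (Z m) := mZ
  letI : ∀ m, MeasurableSpace (W m) := mW
  inferInstance

/-- A Borel parametrization of an equivalence relation `E` on a standard Borel space
`X`: a Borel bijection `φ : X → ⊔_{m ∈ C⁺} (Z m × Y m)`, where the `Z m` are
(pairwise disjoint) standard Borel spaces, the `Y m` are standard Borel spaces with
`|Y m| = m`, and `x E y` iff `φ x` and `φ y` have the same first coordinate (in the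
`Z` factor). -/
structure BorelParametrization {X : Type} [MeasurableSpace X] (E : Setoid X) where
  Z : Cplus → Type
  W : Cplus → Type
  mZ : ∀ m, MeasurableSpace (Z m)
  mW : ∀ m, MeasurableSpace (W m)
  sbZ : ∀ m, @StandardBorelSpace (Z m) (mZ m)
  sbW : ∀ m, @StandardBorelSpace (W m) (mW m)
  cardW : ∀ m : Cplus, Cardinal.mk (W m) = (m : Cardinal)
  param : X → Σ m : Cplus, Z m × W m
  bij : Function.Bijective param
  meas : @Measurable X _ _ (sigmaProdMS Z W mZ mW) param
  eqv : ∀ x y, E.r x y ↔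
    (⟨(param x).1, (param x).2.1⟩ : Σ m : Cplus, Z m) = ⟨(param y).1, (param y).2.1⟩

/-!
A Borel parametrization `φ` identifies `E` with the relation "same first coordinate" on
`⊔ m, Z m × Y m`, whose classes of size `m` are indexed by `Z m`; so `E` has exactly `|Z m|`
classes of size `m`. If two parametrized relations have the same fine shape, the Borel
isomorphism theorem gives Borel bijections `Z m ≃ Z' m` and `Y m ≃ Y' m`, which assemble into
an isomorphism of the two models; by Lusin–Souslin `φ` and `φ'` are Borel isomorphisms, so this
transfers to `X ≃ Y`. Conversely, a bijection respecting the relations maps classes to classes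
of the same size.
-/

open Cardinal Function MeasureTheory

section SigmaMeasurable

variable {ι : Type*} {α β : ι → Type*} [∀ i, MeasurableSpace (α i)]
  [∀ i, MeasurableSpace (β i)]

theorem measurableSet_sigma_iff {s : Set (Σ i, α i)} :
    MeasurableSet s ↔ ∀ i, MeasurableSet (Sigma.mk i ⁻¹' s) :=
  MeasurableSpace.measurableSet_iInf

theorem measurable_sigmaMk (i : ι) : Measurable (Sigma.mk (β := α) i) :=
  fun _ hs => measurableSet_sigma_iff.1 hs i

theorem measurable_sigma_iff {γ : Type*} [MeasurableSpace γ] {f : (Σ i, α i) → γ} :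
    Measurable f ↔ ∀ i, Measurable fun a => f ⟨i, a⟩ :=
  ⟨fun hf i => hf.comp (measurable_sigmaMk i),
    fun hf _ hs => measurableSet_sigma_iff.2 fun i => hf i hs⟩

def MeasurableEquiv.sigmaCongrRight (e : ∀ i, α i ≃ᵐ β i) : (Σ i, α i) ≃ᵐ Σ i, β i where
  toEquiv := Equiv.sigmaCongrRight fun i => (e i).toEquiv
  measurable_toFun :=
    measurable_sigma_iff.2 fun i => (measurable_sigmaMk i).comp (e i).measurable
  measurable_invFun :=
    measurable_sigma_iff.2 fun i => (measurable_sigmaMk i).comp (e i).symm.measurable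

instance Sigma.borelSpace [Countable ι] [∀ i, TopologicalSpace (α i)]
    [∀ i, BorelSpace (α i)] : BorelSpace (Σ i, α i) := by
  refine ⟨le_antisymm (fun s hs => ?_) ?_⟩
  · borelize (Σ i, α i)
    rw [← Set.iUnion_image_preimage_sigma_mk_eq_self s]
    exact MeasurableSet.iUnion fun i => Topology.IsOpenEmbedding.sigmaMk.measurableEmbedding
      |>.measurableSet_image' (measurableSet_sigma_iff.1 hs i)
  · refine MeasurableSpace.generateFrom_le fun s hs => measurableSet_sigma_iff.2 fun i => ?_
    exact (hs.preimage continuous_sigmaMk).measurableSet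

instance StandardBorelSpace.sigma [Countable ι] [∀ i, StandardBorelSpace (α i)] :
    StandardBorelSpace (Σ i, α i) :=
  letI := fun i => upgradeStandardBorel (α i)
  inferInstance

end SigmaMeasurable

section ClassesOfCard

universe u v

variable {X Y : Type u} {B : Type v}

/-- The fine shape of `E` is `m ↦ #(E.classesOfCard m)`. -/
def Setoid.classesOfCard (E : Setoid X) (m : Cardinal.{u}) : Type u :=
  {C : Quotient E // #{x : X // Quotient.mk E x = C} = m}

def Setoid.classesOfCardCongr {E : Setoid X} {F : Setoid Y} (e : X ≃ Y)
    (he : ∀ x x', E x x' ↔ F (e x) (e x')) (m : Cardinal) :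
    E.classesOfCard m ≃ F.classesOfCard m :=
  let q : Quotient E ≃ Quotient F := Quotient.congr e he
  q.subtypeEquiv fun C => by
    rw [mk_congr (e.subtypeEquiv (q := fun y => Quotient.mk F y = q C) fun x => ?_)]
    rw [← Quotient.congr_mk e he, q.apply_eq_iff_eq]

noncomputable def Setoid.classesOfCardEquivOfKer {E : Setoid X} {f : X → B} (hf : Surjective f)
    (hE : ∀ x y, E x y ↔ f x = f y) (m : Cardinal) :
    E.classesOfCard m ≃ {b : B // #{x : X // f x = b} = m} :=
  let q : Quotient E ≃ B :=
    (Quotient.congrRight hE).trans (Setoid.quotientKerEquivOfSurjective f hf)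
  q.subtypeEquiv fun C => by
    induction C using Quotient.ind with | _ x =>
    rw [mk_congr (Equiv.subtypeEquivRight fun y => Quotient.eq.trans (hE y x))]
    rfl

end ClassesOfCard

noncomputable def sigmaMapFstFiberEquiv {ι : Type*} {Z W : ι → Type*} (z : Σ i, Z i) :
    {t : Σ i, Z i × W i // Sigma.map id (fun _ => Prod.fst) t = z} ≃ W z.1 := by
  obtain ⟨i, z⟩ := z
  have hinj : Injective fun w : W i => (⟨i, z, w⟩ : Σ i, Z i × W i) := fun w w' h => by
    simpa using h
  have hfiber : (Sigma.map id fun _ => Prod.fst) ⁻¹' {⟨i, z⟩} =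
      Set.range fun w : W i => (⟨i, z, w⟩ : Σ i, Z i × W i) := by
    refine Set.ext fun ⟨j, z', w'⟩ => ⟨fun h => ?_, fun ⟨w, h⟩ => by cases h; rfl⟩
    obtain ⟨rfl, rfl⟩ := Sigma.mk.inj_iff.1 h
    exact ⟨w', rfl⟩
  exact (Equiv.setCongr hfiber).trans (Equiv.ofInjective _ hinj).symm

theorem Cplus.countable : Cplus.Countable := by
  refine ((Set.countable_range ((↑) : ℕ → Cardinal)).union
    ((Set.countable_singleton 𝔠).insert ℵ₀)).mono ?_
  rintro m ⟨-, hm | rfl⟩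
  · rcases hm.lt_or_eq with hm | rfl
    · obtain ⟨n, rfl⟩ := lt_aleph0.1 hm
      exact .inl ⟨n, rfl⟩
    · exact .inr (.inl rfl)
  · exact .inr (.inr rfl)

instance : Countable Cplus := Cplus.countable.to_subtype

theorem Cplus.le_continuum (m : Cplus) : (m : Cardinal) ≤ 𝔠 :=
  m.2.2.elim (·.trans aleph0_le_continuum) le_of_eq

namespace BorelParametrization

variable {X : Type} [MeasurableSpace X] {E : Setoid X} (P : BorelParametrization E)

instance (m : Cplus) : MeasurableSpace (P.Z m) := P.mZ m
instance (m : Cplus) : MeasurableSpace (P.W m) := P.mW m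
instance (m : Cplus) : StandardBorelSpace (P.Z m) := P.sbZ m
instance (m : Cplus) : StandardBorelSpace (P.W m) := P.sbW m

instance (m : Cplus) : Nonempty (P.W m) := mk_ne_zero_iff.1 (P.cardW m ▸ m.2.1)

/-- The map `π₁ ∘ φ` of the paper. -/
def classIndex (x : X) : Σ m, P.Z m := Sigma.map id (fun _ => Prod.fst) (P.param x)

theorem r_iff (x y : X) : E x y ↔ P.classIndex x = P.classIndex y := P.eqv x y

theorem classIndex_surjective : Surjective P.classIndex :=
  (surjective_id.sigma_map fun _ => Prod.fst_surjective).comp P.bij.2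

theorem mk_classIndex_fiber (b : Σ m, P.Z m) : #{x : X // P.classIndex x = b} = b.1 := by
  rw [← P.cardW]
  exact mk_congr <| ((Equiv.ofBijective _ P.bij).subtypeEquiv fun _ => Iff.rfl).trans
    (sigmaMapFstFiberEquiv b)

theorem mk_classesOfCard (m : Cplus) : #(E.classesOfCard m) = #(P.Z m) := by
  refine mk_congr <|
    (Setoid.classesOfCardEquivOfKer P.classIndex_surjective P.r_iff m).trans ?_
  refine (Equiv.subtypeEquivRight fun b => ?_).trans (Equiv.sigmaSubtype m)
  rw [P.mk_classIndex_fiber, Subtype.coe_inj]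

theorem measurable_param : Measurable P.param := P.meas

/-- By Lusin–Souslin, the inverse of a Borel bijection between standard Borel spaces is Borel. -/
noncomputable def measurableEquiv [StandardBorelSpace X] : X ≃ᵐ Σ m, P.Z m × P.W m where
  toEquiv := Equiv.ofBijective P.param P.bij
  measurable_toFun := P.measurable_param
  measurable_invFun s hs := by
    rw [← Equiv.image_eq_preimage_symm]
    exact (P.measurable_param.measurableEmbedding P.bij.1).measurableSet_image' hs

theorem classIndex_measurableEquiv_symm [StandardBorelSpace X] (t : Σ m, P.Z m × P.W m) :
    P.classIndex (P.measurableEquiv.symm t) = Sigma.map id (fun _ => Prod.fst) t :=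
  congrArg _ (P.measurableEquiv.apply_symm_apply t)

end BorelParametrization

theorem BorelParametrization.exists_measurableEquiv_of_mk_Z_eq {X Y : Type}
    [MeasurableSpace X] [StandardBorelSpace X] [MeasurableSpace Y] [StandardBorelSpace Y]
    {E : Setoid X} {F : Setoid Y} (P : BorelParametrization E) (Q : BorelParametrization F)
    (hZ : ∀ m, #(P.Z m) = #(Q.Z m)) :
    ∃ e : X ≃ᵐ Y, ∀ x x', E x x' ↔ F (e x) (e x') := by
  have hW (m : Cplus) : #(P.W m) = #(Q.W m) := by rw [P.cardW, Q.cardW]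
  let ζ (m : Cplus) : P.Z m ≃ᵐ Q.Z m :=
    PolishSpace.Equiv.measurableEquiv (Cardinal.eq.1 (hZ m)).some
  let ω (m : Cplus) : P.W m ≃ᵐ Q.W m :=
    PolishSpace.Equiv.measurableEquiv (Cardinal.eq.1 (hW m)).some
  let σ := MeasurableEquiv.sigmaCongrRight fun m => (ζ m).prodCongr (ω m)
  have hσ (t : Σ m, P.Z m × P.W m) : Sigma.map id (fun _ => Prod.fst) (σ t) =
      Equiv.sigmaCongrRight (fun m => (ζ m).toEquiv) (Sigma.map id (fun _ => Prod.fst) t) := rfl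
  refine ⟨P.measurableEquiv.trans (σ.trans Q.measurableEquiv.symm), fun x x' => ?_⟩
  simp only [P.r_iff, Q.r_iff, MeasurableEquiv.trans_apply, Q.classIndex_measurableEquiv_symm, hσ,
    EmbeddingLike.apply_eq_iff_eq]
  rfl

/-- Two Borel parametrized equivalence relations are Borel isomorphic iff they have
the same fine shape: there is a Borel bijection `h : X → Y` with
`x E x' ↔ h x F h x'` if and only if for every nonzero cardinal `m ≤ 2^ℵ₀`, the
number of `E`-classes of cardinality `m` equals the number of `F`-classes of
cardinality `m`. -/
theorem stmt17 {X Y : Type} [MeasurableSpace X] [StandardBorelSpace X]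
    [MeasurableSpace Y] [StandardBorelSpace Y]
    (E : Setoid X) (F : Setoid Y)
    (hE : Nonempty (BorelParametrization E)) (hF : Nonempty (BorelParametrization F)) :
    (∃ h : X → Y, Function.Bijective h ∧ Measurable h ∧
        ∀ x x', E.r x x' ↔ F.r (h x) (h x')) ↔
      ∀ m : Cardinal, m ≠ 0 → m ≤ Cardinal.continuum →
        Cardinal.mk {C : Quotient E // Cardinal.mk {x : X // Quotient.mk E x = C} = m} =
          Cardinal.mk {D : Quotient F // Cardinal.mk {y : Y // Quotient.mk F y = D} = m} := by
  obtain ⟨P⟩ := hE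
  obtain ⟨Q⟩ := hF
  refine ⟨fun ⟨h, hbij, _, hr⟩ m _ _ =>
    mk_congr (Setoid.classesOfCardCongr (.ofBijective h hbij) hr m), fun hshape => ?_⟩
  have hZ (m : Cplus) : #(P.Z m) = #(Q.Z m) := by
    rw [← P.mk_classesOfCard, ← Q.mk_classesOfCard]
    exact hshape m m.2.1 (Cplus.le_continuum m)
  obtain ⟨e, he⟩ := P.exists_measurableEquiv_of_mk_Z_eq Q hZ
  exact ⟨e, e.bijective, e.measurable, he⟩
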